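/- arXiv:2402.16758 — 2 statements merged into one kernel-verified Lean document; each statement's English description precedes it below -/
import Mathlib

section
/- In an ordered groupoid, for a composable pair g, h and an identity e ≤ d(h), the identity (gh | e) = (g | r(h|e)) (h | e) holds. -/
universe u v w

/-- An ordered groupoid: a set with a partial multiplication (given by a total
function `mul` together with a definedness predicate `comp`), inversion, and a
compatible partial order with unique restrictions and corestrictions
(conditions (OG1)-(OG3*)). Identities are the elements `e` with `e⁻¹e = e`;
`d g = g⁻¹g`, `r g = gg⁻¹`. -/
structure OrderedGroupoid (G : Type u) [PartialOrder G] where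
  mul : G → G → G
  inv : G → G
  comp : G → G → Prop
  comp_inv_self : ∀ g, comp (inv g) g
  comp_self_inv : ∀ g, comp g (inv g)
  comp_iff : ∀ g h, comp g h ↔ mul (inv g) g = mul h (inv h)
  assoc : ∀ g h k, comp g h → comp h k → mul (mul g h) k = mul g (mul h k)
  comp_mul_left : ∀ g h k, comp g h → comp h k → comp (mul g h) k
  comp_mul_right : ∀ g h k, comp g h → comp h k → comp g (mul h k)
  id_left : ∀ g, mul (mul g (inv g)) g = g
  id_right : ∀ g, mul g (mul (inv g) g) = g
  inv_inv : ∀ g, inv (inv g) = g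
  inv_mul : ∀ g h, comp g h → inv (mul g h) = mul (inv h) (inv g)
  /-- (OG1) -/
  inv_le_inv : ∀ g h, g ≤ h → inv g ≤ inv h
  /-- (OG2) -/
  mul_le_mul : ∀ g h k l, g ≤ h → k ≤ l → comp g k → comp h l → mul g k ≤ mul h l
  /-- restriction `(g|e)` -/
  rest : G → G → G
  rest_le : ∀ g e, mul (inv e) e = e → e ≤ mul (inv g) g → rest g e ≤ g
  rest_d : ∀ g e, mul (inv e) e = e → e ≤ mul (inv g) g →
    mul (inv (rest g e)) (rest g e) = e
  rest_unique : ∀ g e k, mul (inv e) e = e → e ≤ mul (inv g) g → k ≤ g →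
    mul (inv k) k = e → k = rest g e
  /-- corestriction `(e|g)` -/
  corest : G → G → G
  corest_le : ∀ e g, mul (inv e) e = e → e ≤ mul g (inv g) → corest e g ≤ g
  corest_r : ∀ e g, mul (inv e) e = e → e ≤ mul g (inv g) →
    mul (corest e g) (inv (corest e g)) = e
  corest_unique : ∀ e g k, mul (inv e) e = e → e ≤ mul g (inv g) → k ≤ g →
    mul k (inv k) = e → k = corest e g

namespace OrderedGroupoid

variable {G : Type u} [PartialOrder G]

/-- the domain identity `d g = g⁻¹ g` -/
def d (O : OrderedGroupoid G) (g : G) : G := O.mul (O.inv g) g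

/-- the range identity `r g = g g⁻¹` -/
def r (O : OrderedGroupoid G) (g : G) : G := O.mul g (O.inv g)

/-- `e` is an identity of the groupoid -/
def IsId (O : OrderedGroupoid G) (e : G) : Prop := O.d e = e

/-- `m` is the meet of the identities `e` and `f` in the order on identities. -/
def IsMeet (O : OrderedGroupoid G) (e f m : G) : Prop :=
  O.IsId m ∧ m ≤ e ∧ m ≤ f ∧ ∀ w, O.IsId w → w ≤ e → w ≤ f → w ≤ m

/-- the pseudoproduct `g ∗ h = (g | d g ∧ r h)·(d g ∧ r h | h)`, given a witness `m`
for the meet `d g ∧ r h`. -/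
def pseudo (O : OrderedGroupoid G) (g h m : G) : G :=
  O.mul (O.rest g m) (O.corest m h)

/-- `G` is inductive: its identities form a meet semilattice. -/
def Inductive (O : OrderedGroupoid G) : Prop :=
  ∀ e f, O.IsId e → O.IsId f → ∃ m, O.IsMeet e f m

/-- `G` is pseudoassociative: `(g∗h)∗k` is defined iff `g∗(h∗k)` is. -/
def Pseudoassoc (O : OrderedGroupoid G) : Prop :=
  ∀ g h k,
    (∃ m1 m2, O.IsMeet (O.d g) (O.r h) m1 ∧
      O.IsMeet (O.d (O.pseudo g h m1)) (O.r k) m2) ↔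
    (∃ m3 m4, O.IsMeet (O.d h) (O.r k) m3 ∧
      O.IsMeet (O.d g) (O.r (O.pseudo h k m3)) m4)

end OrderedGroupoid

/-- `T` is a (two-sided) ideal of the subring with carrier `R`. -/
def IsIdealIn {A : Type v} [Ring A] (T R : Set A) : Prop :=
  T ⊆ R ∧ (0 : A) ∈ T ∧ (∀ a b, a ∈ T → b ∈ T → a + b ∈ T) ∧
    (∀ a, a ∈ T → -a ∈ T) ∧ ∀ x a, x ∈ R → a ∈ T → x * a ∈ T ∧ a * x ∈ T

/-- A partial ordered (P.O.) action `α = (A_g, α_g)` of an ordered groupoid `G` on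
a ring `A`: ideals `A_{r g} ◁ A`, `A_g ◁ A_{r g}` and ring isomorphisms
`α_g : A_{g⁻¹} → A_g` satisfying (P1)-(P3) and (PO). -/
structure POAction {G : Type u} [PartialOrder G] (O : OrderedGroupoid G)
    (A : Type v) [Ring A] where
  S : G → Set A
  act : G → A → A
  ideal_r : ∀ g, IsIdealIn (S (O.r g)) Set.univ
  ideal_g : ∀ g, IsIdealIn (S g) (S (O.r g))
  bijOn : ∀ g, Set.BijOn (act g) (S (O.inv g)) (S g)
  map_add : ∀ g a b, a ∈ S (O.inv g) → b ∈ S (O.inv g) →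
    act g (a + b) = act g a + act g b
  map_mul : ∀ g a b, a ∈ S (O.inv g) → b ∈ S (O.inv g) →
    act g (a * b) = act g a * act g b
  /-- (P1): `α_e = id` on `A_e` for identities -/
  p1_id : ∀ e, O.IsId e → ∀ a ∈ S e, act e a = a
  /-- (P1): `A = Σ_e A_e` -/
  p1_sum : AddSubgroup.closure {a : A | ∃ e, O.IsId e ∧ a ∈ S e} = ⊤
  /-- (P2) -/
  p2 : ∀ g h, O.comp g h → ∀ x, x ∈ S (O.inv g) → x ∈ S h →
    act (O.inv h) x ∈ S (O.inv (O.mul g h))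
  /-- (P3) -/
  p3 : ∀ g h, O.comp g h → ∀ a, a ∈ S (O.inv h) → act h a ∈ S (O.inv g) →
    act g (act h a) = act (O.mul g h) a
  /-- (PO) -/
  po_subset : ∀ g h, g ≤ h → S g ⊆ S h
  po_act : ∀ g h, g ≤ h → ∀ a ∈ S (O.inv g), act h a = act g a

namespace POAction

variable {G : Type u} [PartialOrder G] {O : OrderedGroupoid G}
variable {A : Type v} [Ring A]

/-- a global action: `A_g = A_{r g}`. -/
def IsGlobal (α : POAction O A) : Prop := ∀ g, α.S g = α.S (O.r g)

/-- a strong P.O. action: `A_{(e|g)} = A_e ∩ A_g` for identities `e ≤ r g`. -/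
def IsStrong (α : POAction O A) : Prop :=
  ∀ g e, O.IsId e → e ≤ O.r g → α.S (O.corest e g) = α.S e ∩ α.S g

end POAction

/-- the set `T` is generated, as an ideal, by a central idempotent. -/
def GenByCentralIdem {A : Type v} [Ring A] (T : Set A) : Prop :=
  ∃ u : A, (∀ x : A, u * x = x * u) ∧ u * u = u ∧ T = {a : A | u * a = a}

namespace POAction

variable {G : Type u} [PartialOrder G] {O : OrderedGroupoid G}
variable {A : Type v} [Ring A]

/-- `α` is unital: every `A_g` is generated by a central idempotent of `A`. -/
def IsUnital (α : POAction O A) : Prop := ∀ g, GenByCentralIdem (α.S g)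

/-- `α` is preunital: every `A_e`, `e` an identity, is generated by a central
idempotent of `A`. -/
def Preunital (α : POAction O A) : Prop :=
  ∀ e, O.IsId e → GenByCentralIdem (α.S e)

end POAction

/-- Equivalence of two P.O. actions of `G` (on rings `A` and `C`): a family of
ring isomorphisms `φ_e : A_e → C_e` with `φ_{r g}(A_g) = C_g` and
`φ_{r g} ∘ α_g = γ_g ∘ φ_{d g}` on `A_{g⁻¹}`. -/
def POAction.Equivalent {G : Type u} [PartialOrder G] {O : OrderedGroupoid G}
    {A : Type v} [Ring A] {C : Type w} [Ring C]
    (α : POAction O A) (γ : POAction O C) : Prop :=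
  ∃ φ : G → A → C,
    (∀ e, O.IsId e → Set.BijOn (φ e) (α.S e) (γ.S e) ∧
      ∀ a b, a ∈ α.S e → b ∈ α.S e →
        φ e (a + b) = φ e a + φ e b ∧ φ e (a * b) = φ e a * φ e b) ∧
    (∀ g, φ (O.r g) '' α.S g = γ.S g) ∧
    ∀ g a, a ∈ α.S (O.inv g) → φ (O.r g) (α.act g a) = γ.act g (φ (O.d g) a)

/-- An (ordered) globalization of a P.O. action `α` of `G` on `A`: an ordered
global action `β` of `G` on a ring `B` together with ring monomorphisms
`φ_e : A_e → B_e` satisfying conditions (i)-(iv). -/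
structure Globalization {G : Type u} [PartialOrder G] (O : OrderedGroupoid G)
    {A : Type v} [Ring A] (α : POAction O A) where
  B : Type v
  [ringB : Ring B]
  β : POAction O B
  global : β.IsGlobal
  φ : G → A → B
  φ_inj : ∀ e, O.IsId e → Set.InjOn (φ e) (α.S e)
  φ_hom : ∀ e, O.IsId e → ∀ a b, a ∈ α.S e → b ∈ α.S e →
    φ e (a + b) = φ e a + φ e b ∧ φ e (a * b) = φ e a * φ e b
  /-- (i): `φ_e(A_e)` is an ideal of `B_e` -/
  cond_i : ∀ e, O.IsId e → IsIdealIn (φ e '' α.S e) (β.S e)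
  /-- (ii) -/
  cond_ii : ∀ g, φ (O.r g) '' α.S g =
    (φ (O.r g) '' α.S (O.r g)) ∩ (β.act g '' (φ (O.d g) '' α.S (O.d g)))
  /-- (iii) -/
  cond_iii : ∀ g a, a ∈ α.S (O.inv g) →
    β.act g (φ (O.d g) a) = φ (O.r g) (α.act g a)
  /-- (iv): `B_g = Σ_{r h ≤ r g} β_h(φ_{d h}(A_{d h}))` -/
  cond_iv : ∀ g, β.S g = ↑(AddSubgroup.closure
    {b : B | ∃ h, O.r h ≤ O.r g ∧ ∃ a ∈ α.S (O.d h), b = β.act h (φ (O.d h) a)})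

namespace Globalization

variable {G : Type u} [PartialOrder G] {O : OrderedGroupoid G}
variable {A : Type v} [Ring A] {α : POAction O A}

attribute [instance] Globalization.ringB

/-- a minimal globalization: `B_g = Σ_{r h = r g} β_h(φ_{d h}(A_{d h}))`. -/
def IsMinimal (Γ : Globalization O α) : Prop :=
  ∀ g, Γ.β.S g = ↑(AddSubgroup.closure
    {b : Γ.B | ∃ h, O.r h = O.r g ∧ ∃ a ∈ α.S (O.d h), b = Γ.β.act h (Γ.φ (O.d h) a)})

/-- two globalizations are equivalent when the underlying global actions are
equivalent P.O. actions. -/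
def Equiv (Γ Γ' : Globalization O α) : Prop := Γ.β.Equivalent Γ'.β

end Globalization

namespace OrderedGroupoid

variable {G : Type u} [PartialOrder G] (O : OrderedGroupoid G)

lemma inv_r (x : G) : O.inv (O.r x) = O.r x := by
  show O.inv (O.mul x (O.inv x)) = _
  rw [O.inv_mul x (O.inv x) (O.comp_self_inv x), O.inv_inv]
  rfl

lemma r_mul_r (x : G) : O.mul (O.r x) (O.r x) = O.r x := by
  show O.mul (O.mul x (O.inv x)) (O.mul x (O.inv x)) = O.mul x (O.inv x)
  have h1 : O.comp (O.mul x (O.inv x)) x :=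
    O.comp_mul_left x (O.inv x) x (O.comp_self_inv x) (O.comp_inv_self x)
  rw [← O.assoc (O.mul x (O.inv x)) x (O.inv x) h1 (O.comp_self_inv x), O.id_left]

lemma isId_r (x : G) : O.IsId (O.r x) := by
  show O.mul (O.inv (O.r x)) (O.r x) = O.r x
  rw [O.inv_r, O.r_mul_r]

lemma d_mul {x y : G} (h : O.comp x y) : O.d (O.mul x y) = O.d y := by
  have hxy : O.mul (O.inv x) x = O.mul y (O.inv y) := O.comp_iff x y |>.mp h
  have h1 : O.comp (O.inv x) (O.mul x y) :=
    O.comp_mul_right (O.inv x) x y (O.comp_inv_self x) h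
  have h2 : O.comp (O.inv y) (O.inv x) := by
    rw [O.comp_iff, O.inv_inv, O.inv_inv, hxy]
  show O.mul (O.inv (O.mul x y)) (O.mul x y) = O.d y
  rw [O.inv_mul x y h, O.assoc _ _ _ h2 h1,
    ← O.assoc (O.inv x) x y (O.comp_inv_self x) h, hxy, O.id_left]
  rfl

end OrderedGroupoid

/-- Lawson, Proposition 4.1.3: for a composable pair `(g,h)` and an
identity `e ≤ d h`, `(gh | e) = (g | r(h|e)) · (h | e)`. -/
theorem stmt3 {G : Type u} [PartialOrder G] (O : OrderedGroupoid G)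
    (g h e : G) (hcomp : O.comp g h) (he : O.IsId e) (hle : e ≤ O.d h) :
    O.rest (O.mul g h) e = O.mul (O.rest g (O.r (O.rest h e))) (O.rest h e) := by
  have he' : O.mul (O.inv e) e = e := he
  have hledh : e ≤ O.mul (O.inv h) h := hle
  set k := O.rest h e with hk
  have hkh : k ≤ h := O.rest_le h e he' hledh
  have hdk : O.mul (O.inv k) k = e := O.rest_d h e he' hledh
  -- f := r k is an identity
  set f := O.r k with hf
  have hfid : O.IsId f := O.isId_r k
  have hf' : O.mul (O.inv f) f = f := hfid
  have hdg_rh : O.mul (O.inv g) g = O.mul h (O.inv h) := O.comp_iff g h |>.mp hcomp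
  -- f ≤ d g
  have hfle : f ≤ O.mul (O.inv g) g := by
    rw [hdg_rh]
    exact O.mul_le_mul k h (O.inv k) (O.inv h) hkh (O.inv_le_inv k h hkh)
      (O.comp_self_inv k) (O.comp_self_inv h)
  set j := O.rest g f with hj
  have hjg : j ≤ g := O.rest_le g f hf' hfle
  have hdj : O.mul (O.inv j) j = f := O.rest_d g f hf' hfle
  have hjk : O.comp j k := by rw [O.comp_iff, hdj]; rfl
  have hjkle : O.mul j k ≤ O.mul g h :=
    O.mul_le_mul j g k h hjg hkh hjk hcomp
  have hdjk : O.mul (O.inv (O.mul j k)) (O.mul j k) = e := by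
    have := O.d_mul hjk
    simpa [OrderedGroupoid.d, hdk] using this
  have hdgh : e ≤ O.mul (O.inv (O.mul g h)) (O.mul g h) := by
    have := O.d_mul hcomp
    simp only [OrderedGroupoid.d] at this
    rw [this]; exact hledh
  exact (O.rest_unique (O.mul g h) e (O.mul j k) he' hdgh hjkle hdjk).symm
end

section
/- Let β = (B_g, β_g)_{g∈G} be an ordered global action of an ordered groupoid G on a ring B, and let A be an ideal of B. Define A_e := A ∩ B_e for identities e, A_g := A_{r(g)} ∩ β_g(A_{d(g)}), and α_g := the restriction of β_g to A_{g⁻¹}. Then α = (A_g, α_g)_{g∈G} is a partial ordered action of G on A, i.e., it satisfies conditions (P1)–(P3) and (PO). -/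
universe u v w

/-- The conditions (P1)-(P3) and (PO) for a family `(S g, act g)` to be a P.O.
action of `O` on the subring of `B` with carrier `carrier`. -/
def IsPOActionOn {G : Type u} [PartialOrder G] (O : OrderedGroupoid G)
    {B : Type v} [Ring B] (carrier : Set B) (S : G → Set B) (act : G → B → B) :
    Prop :=
  (∀ g, IsIdealIn (S (O.r g)) carrier) ∧
  (∀ g, IsIdealIn (S g) (S (O.r g))) ∧
  (∀ g, Set.BijOn (act g) (S (O.inv g)) (S g)) ∧
  (∀ g a b, a ∈ S (O.inv g) → b ∈ S (O.inv g) →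
    act g (a + b) = act g a + act g b ∧ act g (a * b) = act g a * act g b) ∧
  (∀ e, O.IsId e → ∀ a ∈ S e, act e a = a) ∧
  (∀ a, a ∈ carrier → a ∈ AddSubgroup.closure {x : B | ∃ e, O.IsId e ∧ x ∈ S e}) ∧
  (∀ g h, O.comp g h → ∀ x, x ∈ S (O.inv g) → x ∈ S h →
    act (O.inv h) x ∈ S (O.inv (O.mul g h))) ∧
  (∀ g h, O.comp g h → ∀ a, a ∈ S (O.inv h) → act h a ∈ S (O.inv g) →
    act g (act h a) = act (O.mul g h) a) ∧
  (∀ g h, g ≤ h → S g ⊆ S h ∧ ∀ a ∈ S (O.inv g), act h a = act g a)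

/-- The standard restriction of a global action `β` to an ideal `A`:
`A_e = A ∩ B_e`, `A_g = A_{r g} ∩ β_g(A_{d g})`, `α_g = β_g|_{A_{g⁻¹}}`. -/
def stdRestSets {G : Type u} [PartialOrder G] (O : OrderedGroupoid G)
    {B : Type v} [Ring B] (β : POAction O B) (A : Set B) (g : G) : Set B :=
  (A ∩ β.S (O.r g)) ∩ β.act g '' (A ∩ β.S (O.d g))

section Stmt4Aux

variable {G : Type u} [PartialOrder G] (O : OrderedGroupoid G)

lemma OG.d_inv (g : G) : O.d (O.inv g) = O.r g := by
  simp [OrderedGroupoid.d, OrderedGroupoid.r, O.inv_inv]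

lemma OG.r_inv (g : G) : O.r (O.inv g) = O.d g := by
  simp [OrderedGroupoid.d, OrderedGroupoid.r, O.inv_inv]

lemma OG.inv_d (g : G) : O.inv (O.d g) = O.d g := by
  show O.inv (O.mul (O.inv g) g) = O.mul (O.inv g) g
  rw [O.inv_mul _ _ (O.comp_inv_self g), O.inv_inv]

lemma OG.comp_d_inv (g : G) : O.comp (O.d g) (O.inv g) :=
  O.comp_mul_left _ _ _ (O.comp_inv_self g) (O.comp_self_inv g)

lemma OG.d_mul_inv (g : G) : O.mul (O.d g) (O.inv g) = O.inv g := by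
  show O.mul (O.mul (O.inv g) g) (O.inv g) = O.inv g
  rw [O.assoc _ _ _ (O.comp_inv_self g) (O.comp_self_inv g)]
  have := O.id_right (O.inv g)
  rwa [O.inv_inv] at this

lemma OG.d_mul_d (g : G) : O.mul (O.d g) (O.d g) = O.d g := by
  show O.mul (O.d g) (O.mul (O.inv g) g) = O.d g
  rw [← O.assoc _ _ _ (OG.comp_d_inv O g) (O.comp_inv_self g), OG.d_mul_inv]
  rfl

lemma OG.isId_d (g : G) : O.IsId (O.d g) := by
  show O.mul (O.inv (O.d g)) (O.d g) = O.d g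
  rw [OG.inv_d, OG.d_mul_d]

lemma OG.isId_r (g : G) : O.IsId (O.r g) := by
  have := OG.isId_d O (O.inv g)
  rwa [OG.d_inv] at this

lemma OG.id_inv {e : G} (he : O.IsId e) : O.inv e = e := by
  conv_lhs => rw [← he]
  rw [OG.inv_d, he]

lemma OG.id_r {e : G} (he : O.IsId e) : O.r e = e := by
  show O.mul e (O.inv e) = e
  rw [OG.id_inv O he]
  conv_lhs => rw [← he]
  rw [OG.d_mul_d, he]

lemma OG.id_d {e : G} (he : O.IsId e) : O.d e = e := he

lemma OG.comp_inv_inv {g h : G} (hc : O.comp g h) :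
    O.comp (O.inv h) (O.inv g) := by
  rw [O.comp_iff, O.inv_inv, O.inv_inv]
  exact ((O.comp_iff g h).1 hc).symm

lemma OG.inv_mul_cancel {g h : G} (hc : O.comp g h) :
    O.mul (O.inv g) (O.mul g h) = h := by
  rw [← O.assoc _ _ _ (O.comp_inv_self g) hc, (O.comp_iff g h).1 hc]
  exact O.id_left h

lemma OG.d_mul {g h : G} (hc : O.comp g h) : O.d (O.mul g h) = O.d h := by
  show O.mul (O.inv (O.mul g h)) (O.mul g h) = O.d h
  rw [O.inv_mul _ _ hc,
    O.assoc _ _ _ (OG.comp_inv_inv O hc)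
      (O.comp_mul_right _ _ _ (O.comp_inv_self g) hc),
    OG.inv_mul_cancel O hc]
  rfl

lemma OG.r_mul {g h : G} (hc : O.comp g h) : O.r (O.mul g h) = O.r g := by
  rw [← OG.d_inv O (O.mul g h), O.inv_mul _ _ hc,
    OG.d_mul O (OG.comp_inv_inv O hc), OG.d_inv]

lemma OG.d_le_d {g h : G} (hle : g ≤ h) : O.d g ≤ O.d h :=
  O.mul_le_mul _ _ _ _ (O.inv_le_inv _ _ hle) hle
    (O.comp_inv_self g) (O.comp_inv_self h)

lemma OG.r_le_r {g h : G} (hle : g ≤ h) : O.r g ≤ O.r h :=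
  O.mul_le_mul _ _ _ _ hle (O.inv_le_inv _ _ hle)
    (O.comp_self_inv g) (O.comp_self_inv h)

variable {B : Type v} [Ring B] (β : POAction O B)

lemma PO.zeroS (g : G) : (0 : B) ∈ β.S g := (β.ideal_g g).2.1

lemma PO.act_zero (g : G) : β.act g 0 = 0 := by
  have h0 : (0 : B) ∈ β.S (O.inv g) := PO.zeroS O β _
  have h := β.map_add g 0 0 h0 h0
  rw [add_zero] at h
  exact left_eq_add.mp h

lemma PO.act_neg (g : G) (a : B) (ha : a ∈ β.S (O.inv g)) :
    β.act g (-a) = - β.act g a := by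
  have hna : -a ∈ β.S (O.inv g) := (β.ideal_g _).2.2.2.1 a ha
  have h := β.map_add g a (-a) ha hna
  rw [add_neg_cancel, PO.act_zero] at h
  exact (neg_eq_of_add_eq_zero_right h.symm).symm


lemma PO.S_inv (hglob : β.IsGlobal) (g : G) : β.S (O.inv g) = β.S (O.d g) := by
  rw [hglob (O.inv g), OG.r_inv]

lemma PO.act_inv_act (hglob : β.IsGlobal) (g : G) (x : B) (hx : x ∈ β.S (O.inv g)) :
    β.act (O.inv g) (β.act g x) = x := by
  have hx' : β.act g x ∈ β.S (O.inv (O.inv g)) := by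
    rw [O.inv_inv]; exact (β.bijOn g).1 hx
  have h3 := β.p3 (O.inv g) g (O.comp_inv_self g) x hx hx'
  rw [h3]
  exact β.p1_id (O.d g) (OG.isId_d O g) x (by rw [← PO.S_inv O β hglob g]; exact hx)

lemma PO.act_act_inv (hglob : β.IsGlobal) (g : G) (x : B) (hx : x ∈ β.S g) :
    β.act g (β.act (O.inv g) x) = x := by
  have h := PO.act_inv_act O β hglob (O.inv g) x (by rw [O.inv_inv]; exact hx)
  rwa [O.inv_inv] at h

variable (A : Set B)

lemma PO.std_inv (g : G) : stdRestSets O β A (O.inv g) =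
    (A ∩ β.S (O.d g)) ∩ β.act (O.inv g) '' (A ∩ β.S (O.r g)) := by
  unfold stdRestSets
  rw [OG.r_inv, OG.d_inv]

lemma PO.std_subset_Sinv (hglob : β.IsGlobal) (g : G) :
    stdRestSets O β A (O.inv g) ⊆ β.S (O.inv g) := by
  rw [PO.std_inv, PO.S_inv O β hglob]
  exact fun x hx => hx.1.2

lemma PO.std_id {e : G} (he : O.IsId e) :
    stdRestSets O β A e = A ∩ β.S e := by
  unfold stdRestSets
  rw [OG.id_r O he, OG.id_d O he]
  ext x
  constructor
  · exact fun h => h.1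
  · intro hx
    exact ⟨hx, x, hx, β.p1_id e he x hx.2⟩

lemma PO.std_bijOn (hglob : β.IsGlobal) (g : G) :
    Set.BijOn (β.act g) (stdRestSets O β A (O.inv g)) (stdRestSets O β A g) := by
  refine ⟨?_, ?_, ?_⟩
  · intro x hx
    rw [PO.std_inv] at hx
    obtain ⟨⟨hxA, hxd⟩, z, hz, hzx⟩ := hx
    have hz' : z ∈ β.S g := by rw [hglob g]; exact hz.2
    have hgx : β.act g x = z := by
      rw [← hzx]; exact PO.act_act_inv O β hglob g z hz'
    exact ⟨by rw [hgx]; exact hz, ⟨x, ⟨hxA, hxd⟩, rfl⟩⟩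
  · intro x hx y hy hxy
    exact (β.bijOn g).2.1 (PO.std_subset_Sinv O β A hglob g hx)
      (PO.std_subset_Sinv O β A hglob g hy) hxy
  · intro y hy
    obtain ⟨⟨hyA, hyr⟩, y', hy', hy'y⟩ := hy
    have hy'' : y' ∈ β.S (O.inv g) := by
      rw [PO.S_inv O β hglob]; exact hy'.2
    refine ⟨y', ?_, hy'y⟩
    rw [PO.std_inv]
    refine ⟨hy', y, ⟨hyA, hyr⟩, ?_⟩
    rw [← hy'y]
    exact PO.act_inv_act O β hglob g y' hy''

end Stmt4Aux

/-- the standard restriction of an ordered global action `β` of `G`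
on a ring `B` to an ideal `A` of `B` is a partial ordered action of `G` on `A`,
i.e. it satisfies (P1)-(P3) and (PO). -/
theorem stmt4 {G : Type u} [PartialOrder G] (O : OrderedGroupoid G)
    {B : Type v} [Ring B] (β : POAction O B) (hglob : β.IsGlobal)
    (A : Set B) (hA : IsIdealIn A Set.univ) :
    IsPOActionOn O A (stdRestSets O β A) β.act := by
  have hSr : ∀ g : G, stdRestSets O β A (O.r g) = A ∩ β.S (O.r g) := fun g => by
    have := PO.std_id O β A (OG.isId_r O g)
    exact this
  have hidealSe : ∀ e : G, O.IsId e → IsIdealIn (β.S e) Set.univ := fun e he => by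
    have := β.ideal_r e
    rwa [OG.id_r O he] at this
  refine ⟨?_, ?_, PO.std_bijOn O β A hglob, ?_, ?_, ?_, ?_, ?_, ?_⟩
  · -- A_{r g} is an ideal of A
    intro g
    rw [hSr g]
    have hI := β.ideal_r g
    refine ⟨fun x hx => hx.1, ⟨hA.2.1, hI.2.1⟩, ?_, ?_, ?_⟩
    · exact fun a b ha hb => ⟨hA.2.2.1 a b ha.1 hb.1, hI.2.2.1 a b ha.2 hb.2⟩
    · exact fun a ha => ⟨hA.2.2.2.1 a ha.1, hI.2.2.2.1 a ha.2⟩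
    · intro x a hx ha
      have h1 := hA.2.2.2.2 x a trivial ha.1
      have h2 := hI.2.2.2.2 x a trivial ha.2
      exact ⟨⟨h1.1, h2.1⟩, ⟨h1.2, h2.2⟩⟩
  · -- A_g is an ideal of A_{r g}
    intro g
    rw [hSr g]
    have hId : IsIdealIn (β.S (O.d g)) Set.univ := hidealSe (O.d g) (OG.isId_d O g)
    have hIr := β.ideal_r g
    have hSinv := PO.S_inv O β hglob g
    have hzero : (0:B) ∈ stdRestSets O β A g := by
      refine ⟨⟨hA.2.1, hIr.2.1⟩, 0, ⟨hA.2.1, hId.2.1⟩, PO.act_zero O β g⟩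
    refine ⟨fun x hx => hx.1, hzero, ?_, ?_, ?_⟩
    · rintro a b ⟨ha1, a', ha', haa⟩ ⟨hb1, b', hb', hbb⟩
      refine ⟨⟨hA.2.2.1 a b ha1.1 hb1.1, hIr.2.2.1 a b ha1.2 hb1.2⟩,
        a' + b', ⟨hA.2.2.1 a' b' ha'.1 hb'.1, hId.2.2.1 a' b' ha'.2 hb'.2⟩, ?_⟩
      rw [β.map_add g a' b' (by rw [hSinv]; exact ha'.2) (by rw [hSinv]; exact hb'.2),
        haa, hbb]
    · rintro a ⟨ha1, a', ha', haa⟩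
      refine ⟨⟨hA.2.2.2.1 a ha1.1, hIr.2.2.2.1 a ha1.2⟩,
        -a', ⟨hA.2.2.2.1 a' ha'.1, hId.2.2.2.1 a' ha'.2⟩, ?_⟩
      rw [PO.act_neg O β g a' (by rw [hSinv]; exact ha'.2), haa]
    · rintro x a ⟨hxA, hxr⟩ ⟨ha1, a', ha', haa⟩
      have hxS : x ∈ β.S g := by rw [hglob g]; exact hxr
      obtain ⟨x', hx', hxx⟩ := (β.bijOn g).2.2 hxS
      have ha'S : a' ∈ β.S (O.inv g) := by rw [hSinv]; exact ha'.2
      have hx'd : x' ∈ β.S (O.d g) := by rw [← hSinv]; exact hx'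
      constructor
      · -- x * a
        refine ⟨⟨(hA.2.2.2.2 x a trivial ha1.1).1, (hIr.2.2.2.2 x a trivial ha1.2).1⟩,
          x' * a', ⟨(hA.2.2.2.2 x' a' trivial ha'.1).1,
            ((hId.2.2.2.2 a' x' trivial hx'd).2 : x' * a' ∈ _)⟩, ?_⟩
        rw [β.map_mul g x' a' hx' ha'S, hxx, haa]
      · -- a * x
        refine ⟨⟨(hA.2.2.2.2 x a trivial ha1.1).2, (hIr.2.2.2.2 x a trivial ha1.2).2⟩,
          a' * x', ⟨(hA.2.2.2.2 x' a' trivial ha'.1).2,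
            ((hId.2.2.2.2 a' x' trivial hx'd).1 : a' * x' ∈ _)⟩, ?_⟩
        rw [β.map_mul g a' x' ha'S hx', hxx, haa]
  · -- additivity and multiplicativity
    intro g a b ha hb
    have ha' := PO.std_subset_Sinv O β A hglob g ha
    have hb' := PO.std_subset_Sinv O β A hglob g hb
    exact ⟨β.map_add g a b ha' hb', β.map_mul g a b ha' hb'⟩
  · -- (P1) identity
    intro e he a ha
    rw [PO.std_id O β A he] at ha
    exact β.p1_id e he a ha.2
  · -- (P1) sum
    intro a ha
    have h1 : (1 : B) ∈ AddSubgroup.closure {b : B | ∃ e, O.IsId e ∧ b ∈ β.S e} := by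
      rw [β.p1_sum]; trivial
    have key : a * (1 : B) ∈
        AddSubgroup.closure {x : B | ∃ e, O.IsId e ∧ x ∈ stdRestSets O β A e} := by
      refine AddSubgroup.closure_induction
        (p := fun b _ => a * b ∈ AddSubgroup.closure
          {x : B | ∃ e, O.IsId e ∧ x ∈ stdRestSets O β A e}) ?_ ?_ ?_ ?_ h1
      · rintro b ⟨e, he, hb⟩
        apply AddSubgroup.subset_closure
        refine ⟨e, he, ?_⟩
        rw [PO.std_id O β A he]
        exact ⟨(hA.2.2.2.2 b a trivial ha).2,
          ((hidealSe e he).2.2.2.2 a b trivial hb).1⟩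
      · show a * (0:B) ∈ _
        rw [mul_zero]; exact AddSubgroup.zero_mem _
      · intro x y hx hy hax hay
        show a * (x + y) ∈ _
        rw [mul_add]; exact AddSubgroup.add_mem _ hax hay
      · intro x hx hax
        show a * (-x) ∈ _
        rw [mul_neg]; exact AddSubgroup.neg_mem _ hax
    rwa [mul_one] at key
  · -- (P2)
    intro g h hc x hxg hxh
    rw [PO.std_inv O β A] at hxg
    obtain ⟨⟨hxA, hxd⟩, z, hz, hzx⟩ := hxg
    obtain ⟨⟨hxA', hxrh⟩, x', hx', hx'x⟩ := hxh
    rw [PO.std_inv O β A, OG.r_mul O hc, OG.d_mul O hc]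
    have hx'S : x' ∈ β.S (O.inv h) := by rw [PO.S_inv O β hglob]; exact hx'.2
    have hinvx : β.act (O.inv h) x = x' := by
      rw [← hx'x]; exact PO.act_inv_act O β hglob h x' hx'S
    refine ⟨by rw [hinvx]; exact hx', z, hz, ?_⟩
    -- act (inv (g h)) z = act (inv h) x
    have hzS : z ∈ β.S (O.inv (O.inv g)) := by
      rw [O.inv_inv, hglob g]; exact hz.2
    have hxS' : β.act (O.inv g) z ∈ β.S (O.inv (O.inv h)) := by
      rw [hzx, O.inv_inv, hglob h]; exact hxrh
    have h3 := β.p3 (O.inv h) (O.inv g) (OG.comp_inv_inv O hc) z hzS hxS'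
    rw [hzx] at h3
    rw [O.inv_mul _ _ hc, ← h3]
  · -- (P3)
    intro g h hc a ha hact
    have ha' : a ∈ β.S (O.inv h) := PO.std_subset_Sinv O β A hglob h ha
    have hact' : β.act h a ∈ β.S (O.inv g) := PO.std_subset_Sinv O β A hglob g hact
    exact β.p3 g h hc a ha' hact'
  · -- (PO)
    intro g h hle
    constructor
    · rintro x ⟨⟨hxA, hxr⟩, x', hx', hx'x⟩
      have hdd := β.po_subset _ _ (OG.d_le_d O hle) hx'.2
      have hrr := β.po_subset _ _ (OG.r_le_r O hle) hxr
      refine ⟨⟨hxA, hrr⟩, x', ⟨hx'.1, hdd⟩, ?_⟩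
      rw [← hx'x]
      exact β.po_act g h hle x' (by rw [PO.S_inv O β hglob]; exact hx'.2)
    · intro a ha
      exact β.po_act g h hle a (PO.std_subset_Sinv O β A hglob g ha)
end
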